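/- Let f : ℝ^d → ℝ be convex with ‖∇f(x)‖ ≤ G for all x in a convex set X containing the ball rB (with r > 0), and suppose |f| ≤ V on X. Let ζ ∈ (0,1) and (1−ζ)X = {(1−ζ)x : x ∈ X}. Then min_{x ∈ (1−ζ)X} f(x) ≤ min_{x ∈ X} f(x) + 2ζV. -/
import Mathlib


open scoped Pointwise

/-- shrunk-domain comparison. If `f` is convex on `X`, has gradient
bounded by `G` on `X`, `X` contains the ball of radius `r > 0` around the origin,
`|f| ≤ V` on `X`, and `ζ ∈ (0,1)`, then
`min_{(1−ζ)X} f ≤ min_X f + 2ζV`. -/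
theorem shrunk_domain_min_le (d : ℕ) (X : Set (EuclideanSpace ℝ (Fin d)))
    (f : EuclideanSpace ℝ (Fin d) → ℝ)
    (hXconv : Convex ℝ X) (hfconv : ConvexOn ℝ X f)
    (G r V : ℝ) (hr : 0 < r)
    (hball : Metric.closedBall (0 : EuclideanSpace ℝ (Fin d)) r ⊆ X)
    (hgrad : ∀ x ∈ X, ‖gradient f x‖ ≤ G)
    (hV : ∀ x ∈ X, |f x| ≤ V)
    (ζ : ℝ) (hζ0 : 0 < ζ) (hζ1 : ζ < 1) :
    sInf (f '' ((1 - ζ) • X)) ≤ sInf (f '' X) + 2 * ζ * V := by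
  have h0 : (0 : EuclideanSpace ℝ (Fin d)) ∈ X := hball (by simp [hr.le])
  -- key pointwise bound
  have key : ∀ x ∈ X, f ((1 - ζ) • x) ≤ f x + 2 * ζ * V := by
    intro x hx
    have hVx := hV x hx
    have hV0 := hV 0 h0
    have hconv := hfconv.2 hx h0 (by linarith : (0:ℝ) ≤ 1 - ζ) hζ0.le (by ring)
    simp only [smul_zero, add_zero, smul_eq_mul] at hconv
    have h1 : (1 - ζ) * f x + ζ * f 0 ≤ f x + 2 * ζ * V := by
      have := abs_le.1 hVx
      have := abs_le.1 hV0
      nlinarith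
    linarith
  have hsub : (1 - ζ) • X ⊆ X := by
    intro y hy
    obtain ⟨x, hx, rfl⟩ := hy
    have := hXconv hx h0 (by linarith : (0:ℝ) ≤ 1 - ζ) hζ0.le (by ring)
    simpa using this
  have hbdd : BddBelow (f '' ((1 - ζ) • X)) := by
    refine ⟨-V, ?_⟩
    rintro b ⟨y, hy, rfl⟩
    have := abs_le.1 (hV y (hsub hy))
    linarith [this.1]
  have hne : (f '' X).Nonempty := ⟨f 0, 0, h0, rfl⟩
  have : sInf (f '' ((1 - ζ) • X)) - 2 * ζ * V ≤ sInf (f '' X) := by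
    apply le_csInf hne
    rintro b ⟨x, hx, rfl⟩
    have hmem : f ((1 - ζ) • x) ∈ f '' ((1 - ζ) • X) := ⟨(1 - ζ) • x, ⟨x, hx, rfl⟩, rfl⟩
    have := csInf_le hbdd hmem
    linarith [key x hx]
  linarith
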